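/- arXiv:1907.12657 — 2 statements merged into one kernel-verified Lean document; each statement's English description precedes it below -/
import Mathlib

section
/- For all (k1,k2) ∈ ℤ²_{≥0} with (k1,k2) ≠ (0,0): ∑_{(i,j)∈S°} binom(k1,i)·binom(k2,j)·(-1)^{k1+k2-i-j}·(i·x + j·y + z)^ℓ = -∑_{(i,j)∈S°} binom(k1,i)·binom(k2,j)·i!·j!·C(i,j,ℓ), where S° = {(i,j) : 0≤i≤k1, 0≤j≤k2} \ {(k1,k2)}, as polynomials in ℤ[x,y,z] for every ℓ ≥ 0. -/
/-- Stirling numbers of the second kind. -/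
def stirling2 : ℕ → ℕ → ℕ
  | 0, 0 => 1
  | 0, _ + 1 => 0
  | _ + 1, 0 => 0
  | n + 1, k + 1 => stirling2 n k + (k + 1) * stirling2 n (k + 1)

open MvPolynomial in
/-- The polynomial `C(k1,k2,ℓ) = ∑_{i1 ≥ k1, i2 ≥ k2, i1+i2 ≤ ℓ}
binom(ℓ,i1) binom(ℓ-i1,i2) S(i1,k1) S(i2,k2) x^{i1} y^{i2} z^{ℓ-i1-i2}` in `ℤ[x,y,z]`
(the conditions `i1 ≥ k1`, `i2 ≥ k2` are automatic since `S(i,k) = 0` for `i < k`). -/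
noncomputable def Cpoly (k1 k2 l : ℕ) : MvPolynomial (Fin 3) ℤ :=
  ∑ i1 ∈ Finset.range (l + 1), ∑ i2 ∈ Finset.range (l + 1 - i1),
    (MvPolynomial.C ((l.choose i1 * (l - i1).choose i2
        * stirling2 i1 k1 * stirling2 i2 k2 : ℕ) : ℤ)) *
      X 0 ^ i1 * X 1 ^ i2 * X 2 ^ (l - i1 - i2)

open MvPolynomial in
/-- `A_{ij} = i·x + j·y + z`. -/
noncomputable def Apoly (i j : ℕ) : MvPolynomial (Fin 3) ℤ :=
  (i : MvPolynomial (Fin 3) ℤ) * X 0 + (j : MvPolynomial (Fin 3) ℤ) * X 1 + X 2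

/-!
Expanding `(i x + j y + z)^ℓ` by the trinomial theorem and each `i ^ n` by the Stirling expansion
`i ^ n = ∑ₐ C(i,a) a! S(n,a)` gives `A_{ij}^ℓ = ∑_{a ≤ i, b ≤ j} C(i,a) C(j,b) a! b! C(a,b,ℓ)`.
Binomial inversion in both indices turns this into `∑ C(k₁,p) C(k₂,q) (-1)^{k₁+k₂-p-q} A_{pq}^ℓ =
k₁! k₂! C(k₁,k₂,ℓ)` over the full rectangle. Removing the corner `(k₁,k₂)` from both identities
moves `A_{k₁k₂}^ℓ - k₁! k₂! C(k₁,k₂,ℓ)` from one side to the other.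
-/

open Finset

theorem pow_eq_sum_stirling2_mul_descFactorial (i n : ℕ) :
    i ^ n = ∑ a ∈ range (i + 1), stirling2 n a * i.descFactorial a := by
  induction n with
  | zero => simp [sum_range_succ', stirling2]
  | succ n ih =>
    have mul_descFactorial (a : ℕ) :
        i * i.descFactorial a = i.descFactorial (a + 1) + a * i.descFactorial a := by
      rcases le_or_gt a i with hai | hia
      · rw [Nat.descFactorial_succ, ← add_mul, Nat.sub_add_cancel hai]
      · simp [Nat.descFactorial_of_lt hia]
    calc i ^ (n + 1)
        = ∑ a ∈ range (i + 1), stirling2 n a * i.descFactorial (a + 1)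
          + ∑ a ∈ range (i + 1), a * stirling2 n a * i.descFactorial a := by
          rw [pow_succ', ih, mul_sum, ← sum_add_distrib]
          refine sum_congr rfl fun a _ => ?_
          rw [mul_left_comm, mul_descFactorial]
          ring
      _ = ∑ a ∈ range (i + 1), stirling2 (n + 1) a * i.descFactorial a := by
          rw [sum_range_succ, sum_range_succ' _ i, sum_range_succ' _ i,
            Nat.descFactorial_of_lt (Nat.lt_succ_self i)]
          simp only [stirling2, mul_zero, zero_mul, add_zero, add_mul, sum_add_distrib]

theorem cast_pow_eq_sum_choose_mul_factorial_mul_stirling2 {R : Type*} [Semiring R] (i n : ℕ) :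
    (i : R) ^ n = ∑ a ∈ range (i + 1), (i.choose a : R) * (a.factorial * stirling2 n a) := by
  have h : i ^ n = ∑ a ∈ range (i + 1), i.choose a * (a.factorial * stirling2 n a) := by
    rw [pow_eq_sum_stirling2_mul_descFactorial]
    refine sum_congr rfl fun a _ => ?_
    rw [Nat.descFactorial_eq_factorial_mul_choose]
    ring
  simpa using congrArg (Nat.cast : ℕ → R) h

theorem sum_neg_one_pow_mul_choose_mul_choose (k a : ℕ) :
    ∑ p ∈ range (k + 1), (-1 : ℤ) ^ (k - p) * k.choose p * p.choose a =
      if k = a then 1 else 0 := by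
  have := fwdDiff_iter_choose_zero a k
  rw [fwdDiff_iter_eq_sum_shift] at this
  simpa [smul_eq_mul] using this

theorem binomial_inversion {R : Type*} [Ring R] {f g : ℕ → R}
    (hf : ∀ i, f i = ∑ a ∈ range (i + 1), (i.choose a : R) * g a) (k : ℕ) :
    ∑ p ∈ range (k + 1), (-1) ^ (k - p) * (k.choose p : R) * f p = g k := by
  have hf' : ∀ p ∈ range (k + 1), f p = ∑ a ∈ range (k + 1), (p.choose a : R) * g a := by
    intro p hp
    rw [hf, sum_subset (range_subset_range.2 (mem_range.1 hp))]
    intro a _ ha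
    rw [Nat.choose_eq_zero_of_lt (by simpa using ha), Nat.cast_zero, zero_mul]
  calc ∑ p ∈ range (k + 1), (-1) ^ (k - p) * (k.choose p : R) * f p
      = ∑ a ∈ range (k + 1),
          ((∑ p ∈ range (k + 1), (-1 : ℤ) ^ (k - p) * k.choose p * p.choose a : ℤ) : R) * g a := by
        rw [sum_congr rfl fun p hp => by rw [hf' p hp, mul_sum], sum_comm]
        refine sum_congr rfl fun a _ => ?_
        push_cast
        rw [sum_mul]
        refine sum_congr rfl fun p _ => ?_
        noncomm_ring
    _ = g k := by simp [sum_neg_one_pow_mul_choose_mul_choose]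

theorem binomial_inversion₂ {R : Type*} [CommRing R] {F G : ℕ → ℕ → R}
    (hF : ∀ i j, F i j = ∑ a ∈ range (i + 1), ∑ b ∈ range (j + 1),
      (i.choose a * j.choose b : R) * G a b) (k₁ k₂ : ℕ) :
    ∑ p ∈ range (k₁ + 1) ×ˢ range (k₂ + 1),
      (k₁.choose p.1 * k₂.choose p.2 : R) * (-1) ^ (k₁ + k₂ - p.1 - p.2) * F p.1 p.2 = G k₁ k₂ := by
  have inner (q : ℕ) : ∑ p ∈ range (k₁ + 1), (-1) ^ (k₁ - p) * (k₁.choose p : R) * F p q =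
      ∑ b ∈ range (q + 1), (q.choose b : R) * G k₁ b :=
    binomial_inversion (f := (F · q)) (g := fun a => ∑ b ∈ range (q + 1), (q.choose b : R) * G a b)
      (fun i => by simp only [hF, mul_sum, mul_assoc]) k₁
  rw [sum_product_right, ← binomial_inversion (g := G k₁) (fun j => rfl) k₂]
  refine sum_congr rfl fun q hq => ?_
  rw [← inner, mul_sum]
  refine sum_congr rfl fun p hp => ?_
  rw [show k₁ + k₂ - p - q = (k₁ - p) + (k₂ - q) by
    simp only [mem_range] at hp hq; omega, pow_add]
  ring

theorem add_add_pow {R : Type*} [CommSemiring R] (x y z : R) (l : ℕ) :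
    (x + y + z) ^ l = ∑ i₁ ∈ range (l + 1), ∑ i₂ ∈ range (l + 1 - i₁),
      (l.choose i₁ * (l - i₁).choose i₂ : R) * x ^ i₁ * y ^ i₂ * z ^ (l - i₁ - i₂) := by
  rw [add_assoc, add_pow]
  refine sum_congr rfl fun i₁ hi₁ => ?_
  rw [add_pow, Nat.sub_add_comm (Nat.lt_succ_iff.1 (mem_range.1 hi₁)), mul_sum, sum_mul]
  refine sum_congr rfl fun i₂ _ => ?_
  rw [Nat.sub_sub]
  ring

open MvPolynomial in
theorem Apoly_pow_eq_sum_choose_mul_Cpoly (i j l : ℕ) :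
    Apoly i j ^ l = ∑ a ∈ range (i + 1), ∑ b ∈ range (j + 1),
      (i.choose a * j.choose b : MvPolynomial (Fin 3) ℤ) *
        ((a.factorial * b.factorial : MvPolynomial (Fin 3) ℤ) * Cpoly a b l) := by
  calc Apoly i j ^ l
      = ∑ i₁ ∈ range (l + 1), ∑ i₂ ∈ range (l + 1 - i₁), ∑ a ∈ range (i + 1), ∑ b ∈ range (j + 1),
          (i.choose a * j.choose b : MvPolynomial (Fin 3) ℤ) *
            ((a.factorial * b.factorial : MvPolynomial (Fin 3) ℤ) *
              (C ((l.choose i₁ * (l - i₁).choose i₂ * stirling2 i₁ a * stirling2 i₂ b : ℕ) : ℤ) *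
                X 0 ^ i₁ * X 1 ^ i₂ * X 2 ^ (l - i₁ - i₂))) := by
        rw [Apoly, add_add_pow]
        refine sum_congr rfl fun i₁ _ => sum_congr rfl fun i₂ _ => ?_
        rw [mul_pow, mul_pow, cast_pow_eq_sum_choose_mul_factorial_mul_stirling2 i i₁,
          cast_pow_eq_sum_choose_mul_factorial_mul_stirling2 j i₂]
        simp only [sum_mul, mul_sum]
        rw [sum_comm]
        refine sum_congr rfl fun a _ => sum_congr rfl fun b _ => ?_
        rw [map_natCast]
        push_cast
        ring
    _ = _ := by
        rw [sum_sigma', sum_comm]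
        refine sum_congr rfl fun a _ => ?_
        rw [sum_comm]
        simp only [Cpoly, mul_sum, sum_sigma']

theorem alt_sum_punctured_eq_neg_general (k1 k2 l : ℕ) :
    ∑ p ∈ (Finset.range (k1 + 1) ×ˢ Finset.range (k2 + 1)).erase (k1, k2),
        (MvPolynomial.C ((k1.choose p.1 * k2.choose p.2 : ℕ) : ℤ))
          * (-1) ^ (k1 + k2 - p.1 - p.2) * Apoly p.1 p.2 ^ l =
      -∑ p ∈ (Finset.range (k1 + 1) ×ˢ Finset.range (k2 + 1)).erase (k1, k2),
        (MvPolynomial.C ((k1.choose p.1 * k2.choose p.2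
            * p.1.factorial * p.2.factorial : ℕ) : ℤ)) * Cpoly p.1 p.2 l := by
  have corner : (k1, k2) ∈ range (k1 + 1) ×ˢ range (k2 + 1) := by simp
  have inversion :=
    binomial_inversion₂ (fun i j => Apoly_pow_eq_sum_choose_mul_Cpoly i j l) k1 k2
  have expansion := Apoly_pow_eq_sum_choose_mul_Cpoly k1 k2 l
  rw [← sum_product'] at expansion
  rw [sum_erase_eq_sub corner, sum_erase_eq_sub corner]
  simp only [map_natCast]
  push_cast [Nat.choose_self, show k1 + k2 - k1 - k2 = 0 by omega]
  simp only [mul_assoc] at *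
  linear_combination inversion - expansion

theorem alt_sum_punctured_eq_neg (k1 k2 l : ℕ) (h : (k1, k2) ≠ (0, 0)) :
    ∑ p ∈ (Finset.range (k1 + 1) ×ˢ Finset.range (k2 + 1)).erase (k1, k2),
        (MvPolynomial.C ((k1.choose p.1 * k2.choose p.2 : ℕ) : ℤ))
          * (-1) ^ (k1 + k2 - p.1 - p.2) * Apoly p.1 p.2 ^ l =
      -∑ p ∈ (Finset.range (k1 + 1) ×ˢ Finset.range (k2 + 1)).erase (k1, k2),
        (MvPolynomial.C ((k1.choose p.1 * k2.choose p.2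
            * p.1.factorial * p.2.factorial : ℕ) : ℤ)) * Cpoly p.1 p.2 l :=
  alt_sum_punctured_eq_neg_general k1 k2 l
end

section
/- Let R be a finite set of r points in ℤ²_{≥0} satisfying the monomial condition. Then any vector a = (a_0,…,a_{r-1}) whose associated monic polynomial b_a(s) = s^r + a_{r-1}s^{r-1} + ⋯ + a_0 factors as ∏_{(i,j)∈R}(s - (ix+jy+z)) satisfies, for every (k1,k2) ∈ R, the equation ∑_{ℓ=0}^{r-1} C(k1,k2,ℓ)·a_ℓ = -C(k1,k2,r) in ℤ[x,y,z] (with a_r := 1, i.e., ∑_{ℓ=0}^{r} C(k1,k2,ℓ)·a_ℓ = 0). -/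
/-- A finite set `R ⊆ ℤ²_{≥0}` satisfies the monomial condition iff it is
downward closed. -/
def MonomialCondition (R : Finset (ℕ × ℕ)) : Prop :=
  ∀ p ∈ R, ∀ q : ℕ × ℕ, q.1 ≤ p.1 → q.2 ≤ p.2 → q ∈ R


/-!
Up to the factor `k₁! k₂!`, the sum `∑_l C(k₁,k₂,l) a_l` is the mixed forward difference
`Δ_v^{k₂} Δ_u^{k₁}` at `(0,0)` of `(u,v) ↦ b(ux + vy + z)`: expanding `(ux + vy + z)^l` by the
binomial theorem reduces this to the classical identity `Δ^k (u ↦ uⁿ)(0) = k! S(n,k)`, which comes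
from `uⁿ = ∑_k S(n,k) k! binom(u,k)`. That difference only sees the values at the points
`(u,v) ≤ (k₁,k₂)`, which lie in `R` by downward closure and so are roots of `b`; as `ℤ[x,y,z]` is
torsion-free, the factor `k₁! k₂!` cancels.
-/

open Finset fwdDiff
open scoped Nat

theorem stirling2_eq_stirlingSecond : stirling2 = Nat.stirlingSecond := by
  funext n k
  induction n generalizing k with
  | zero => cases k <;> rfl
  | succ n ih =>
    cases k with
    | zero => rfl
    | succ k => rw [stirling2, Nat.stirlingSecond_succ_succ, ih, ih, add_comm]

theorem Nat.mul_choose_eq (x k : ℕ) :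
    x * x.choose k = (k + 1) * x.choose (k + 1) + k * x.choose k := by
  rw [mul_comm (k + 1), Nat.choose_succ_right_eq, mul_comm k, ← mul_add, mul_comm]
  rcases le_or_gt k x with hk | hk
  · rw [Nat.sub_add_cancel hk]
  · simp [Nat.choose_eq_zero_of_lt hk]

theorem Nat.pow_eq_sum_stirlingSecond_mul_choose (x n : ℕ) :
    x ^ n = ∑ k ∈ range (n + 1), stirlingSecond n k * k ! * x.choose k := by
  induction n with
  | zero => simp
  | succ n ih =>
    set g : ℕ → ℕ := fun k ↦ k * (stirlingSecond n k * k ! * x.choose k)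
    have hshift : ∑ k ∈ range (n + 1), g (k + 1) = ∑ k ∈ range (n + 1), g k := by
      have h := (sum_range_succ' g (n + 1)).symm.trans (sum_range_succ g (n + 1))
      simpa [g, stirlingSecond_eq_zero_of_lt (Nat.lt_succ_self n)] using h
    calc x ^ (n + 1)
        = ∑ k ∈ range (n + 1), stirlingSecond n k * k ! * (x * x.choose k) := by
          rw [pow_succ, mul_comm, ih, mul_sum]; exact sum_congr rfl fun _ _ ↦ by ring
      _ = ∑ k ∈ range (n + 1), stirlingSecond n k * (k + 1)! * x.choose (k + 1)
            + ∑ k ∈ range (n + 1), g (k + 1) := by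
          rw [hshift, ← sum_add_distrib]
          refine sum_congr rfl fun k _ ↦ ?_
          rw [Nat.mul_choose_eq, Nat.factorial_succ]; ring
      _ = ∑ k ∈ range (n + 2), stirlingSecond (n + 1) k * k ! * x.choose k := by
          rw [sum_range_succ' _ (n + 1), ← sum_add_distrib]
          simp only [stirlingSecond_succ_succ, stirlingSecond_succ_zero, g, zero_mul, add_zero]
          exact sum_congr rfl fun k _ ↦ by ring

theorem fwdDiff_iter_natCast_pow_int (k n : ℕ) :
    (Δ_[1])^[k] (fun x : ℕ ↦ (x : ℤ) ^ n) 0 = k ! * Nat.stirlingSecond n k := by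
  have hexp : (fun x : ℕ ↦ (x : ℤ) ^ n) = ∑ j ∈ range (n + 1),
      ((Nat.stirlingSecond n j * j ! : ℕ) : ℤ) • fun x : ℕ ↦ (x.choose j : ℤ) := by
    funext x
    simp only [Finset.sum_apply, Pi.smul_apply, smul_eq_mul]
    exact_mod_cast Nat.pow_eq_sum_stirlingSecond_mul_choose x n
  simp only [hexp, fwdDiff_iter_finsetSum, fwdDiff_iter_const_smul, Finset.sum_apply,
    Pi.smul_apply, fwdDiff_iter_choose_zero, smul_ite, smul_zero, sum_ite_eq, mem_range]
  split_ifs with hk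
  · simp [mul_comm]
  · simp [Nat.stirlingSecond_eq_zero_of_lt (by omega : n < k)]

theorem fwdDiff_iter_natCast_pow {S : Type*} [CommRing S] (k n : ℕ) :
    (Δ_[1])^[k] (fun x : ℕ ↦ (x : S) ^ n) 0 = k ! * Nat.stirlingSecond n k := by
  have h := congrArg (Int.cast : ℤ → S) (fwdDiff_iter_natCast_pow_int k n)
  rw [fwdDiff_iter_eq_sum_shift] at h ⊢
  simpa only [zsmul_eq_mul, smul_eq_mul, zero_add, mul_one, Int.cast_sum, Int.cast_mul,
    Int.cast_pow, Int.cast_natCast, Int.cast_neg, Int.cast_one] using h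

theorem fwdDiff_iter_sum_mul {M S ι : Type*} [AddCommMonoid M] [Ring S] (h : M) (k : ℕ)
    (s : Finset ι) (c : ι → S) (f : ι → M → S) (y : M) :
    (Δ_[h])^[k] (fun u ↦ ∑ i ∈ s, c i * f i u) y = ∑ i ∈ s, c i * (Δ_[h])^[k] (f i) y := by
  simp only [fwdDiff_iter_eq_sum_shift, mul_sum, smul_sum, mul_smul_comm]
  exact sum_comm

theorem fwdDiff_iter_eq_zero_of_forall_le {M G : Type*} [AddCommMonoid M] [AddCommGroup G]
    (h : M) (f : M → G) (k : ℕ) (y : M) (hf : ∀ j ≤ k, f (y + j • h) = 0) :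
    (Δ_[h])^[k] f y = 0 := by
  rw [fwdDiff_iter_eq_sum_shift]
  exact sum_eq_zero fun j hj ↦ by rw [hf j (Nat.lt_succ_iff.mp (mem_range.mp hj)), smul_zero]

theorem fwdDiff_iter_natCast_mul_add_pow {S : Type*} [CommRing S] (k l : ℕ) (x w : S) :
    (Δ_[1])^[k] (fun u : ℕ ↦ ((u : S) * x + w) ^ l) 0
      = ∑ i ∈ range (l + 1),
          x ^ i * w ^ (l - i) * l.choose i * (k ! * Nat.stirlingSecond i k) := by
  have hexp : (fun u : ℕ ↦ ((u : S) * x + w) ^ l)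
      = fun u : ℕ ↦ ∑ i ∈ range (l + 1), x ^ i * w ^ (l - i) * l.choose i * (u : S) ^ i := by
    funext u
    rw [add_pow]
    exact sum_congr rfl fun _ _ ↦ by ring
  simp only [hexp, fwdDiff_iter_sum_mul, fwdDiff_iter_natCast_pow]

theorem fwdDiff_iter_fwdDiff_iter_trinomial_pow {S : Type*} [CommRing S] (k1 k2 l : ℕ)
    (x y z : S) :
    (Δ_[1])^[k2] (fun v : ℕ ↦ (Δ_[1])^[k1] (fun u : ℕ ↦ ((u : S) * x + v * y + z) ^ l) 0) 0
      = k1 ! * k2 ! * ∑ i1 ∈ range (l + 1), ∑ i2 ∈ range (l + 1 - i1),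
          ((l.choose i1 * (l - i1).choose i2
            * Nat.stirlingSecond i1 k1 * Nat.stirlingSecond i2 k2 : ℕ) : S)
            * x ^ i1 * y ^ i2 * z ^ (l - i1 - i2) := by
  have hinner : (fun v : ℕ ↦ (Δ_[1])^[k1] (fun u : ℕ ↦ ((u : S) * x + v * y + z) ^ l) 0)
      = fun v : ℕ ↦ ∑ i1 ∈ range (l + 1),
          x ^ i1 * l.choose i1 * (k1 ! * Nat.stirlingSecond i1 k1)
            * ((v : S) * y + z) ^ (l - i1) := by
    funext v
    simp only [add_assoc, fwdDiff_iter_natCast_mul_add_pow]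
    exact sum_congr rfl fun _ _ ↦ by ring
  rw [hinner, fwdDiff_iter_sum_mul, mul_sum]
  refine sum_congr rfl fun i1 hi1 ↦ ?_
  rw [fwdDiff_iter_natCast_mul_add_pow, mul_sum, mul_sum,
    Nat.sub_add_comm (Nat.lt_succ_iff.mp (mem_range.mp hi1))]
  refine sum_congr rfl fun i2 _ ↦ ?_
  push_cast
  ring

theorem factorial_mul_factorial_mul_Cpoly (k1 k2 l : ℕ) :
    k1 ! * k2 ! * Cpoly k1 k2 l
      = (Δ_[1])^[k2] (fun v : ℕ ↦ (Δ_[1])^[k1] (fun u : ℕ ↦ Apoly u v ^ l) 0) 0 := by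
  simp only [Apoly, fwdDiff_iter_fwdDiff_iter_trinomial_pow, Cpoly, map_natCast,
    stirling2_eq_stirlingSecond]

theorem system_solution (R : Finset (ℕ × ℕ)) (hR : MonomialCondition R) (r : ℕ)
    (hr : r = R.card)
    (b : Polynomial (MvPolynomial (Fin 3) ℤ))
    (hb : b = ∏ p ∈ R, (Polynomial.X - Polynomial.C (Apoly p.1 p.2))) :
    ∀ p ∈ R, ∑ l ∈ Finset.range (r + 1), Cpoly p.1 p.2 l * b.coeff l = 0 := by
  rintro ⟨k1, k2⟩ hk
  have hdeg : b.natDegree < r + 1 := by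
    rw [hb, Polynomial.natDegree_finsetProd_X_sub_C_eq_card, hr]
    exact Nat.lt_succ_self _
  have hroot : ∀ u ≤ k1, ∀ v ≤ k2, b.eval (Apoly u v) = 0 := fun u hu v hv ↦ by
    rw [hb, Polynomial.eval_prod]
    exact prod_eq_zero (hR _ hk (u, v) hu hv) (by simp)
  have hdiff : (k1 ! * k2 ! : MvPolynomial (Fin 3) ℤ)
        * ∑ l ∈ range (r + 1), Cpoly k1 k2 l * b.coeff l
      = (Δ_[1])^[k2] (fun v : ℕ ↦ (Δ_[1])^[k1] (fun u : ℕ ↦ b.eval (Apoly u v)) 0) 0 := by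
    simp only [Polynomial.eval_eq_sum_range' hdeg, fwdDiff_iter_sum_mul,
      ← factorial_mul_factorial_mul_Cpoly, mul_sum]
    exact sum_congr rfl fun l _ ↦ by ring
  have hzero : (Δ_[1])^[k2] (fun v : ℕ ↦ (Δ_[1])^[k1] (fun u : ℕ ↦ b.eval (Apoly u v)) 0) 0 = 0 :=
    fwdDiff_iter_eq_zero_of_forall_le _ _ _ _ fun v hv ↦
      fwdDiff_iter_eq_zero_of_forall_le _ _ _ _ fun u hu ↦ by simpa using hroot u hu v hv
  rw [hzero] at hdiff
  exact (mul_eq_zero.mp hdiff).resolve_left (by simp [Nat.factorial_ne_zero])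
end
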